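/- arXiv:1205.3102 — 2 statements merged into one kernel-verified Lean document; each statement's English description precedes it below -/
import Mathlib

section
/- Let c = (c_λ)_{λ⊢4} ∈ ℝ^5 be a coefficient vector. The quartic form f^{(n)} = Σ_{λ⊢4} c_λ p_λ^{(n)} is a sum of squares of polynomials for every n ≥ 4 if and only if there exist real numbers α_{11}, α_{12}, α_{22}, β_{11}, β_{12}, β_{22} with the 2×2 matrices [[α_{11}, α_{12}],[α_{12}, α_{22}]] and [[β_{11}, β_{12}],[β_{12}, β_{22}]] positive semidefinite, such that for all n ≥ 4: f^{(n)} = α_{11} p_{(1,1,1,1)}^{(n)} + 2α_{12} p_{(2,1,1)}^{(n)} + α_{22} p_{(2,2)}^{(n)} + β_{11}(p_{(2,1,1)}^{(n)} − p_{(1,1,1,1)}^{(n)}) + 2β_{12}(p_{(3,1)}^{(n)} − p_{(2,1,1)}^{(n)}) + β_{22}(p_{(4)}^{(n)} − p_{(2,2)}^{(n)}). -/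
open MvPolynomial

/-- The i-th normalized power sum `p_i^{(n)} = (1/n)(x_1^i + ⋯ + x_n^i)`. -/
noncomputable def psum (n i : ℕ) : MvPolynomial (Fin n) ℝ :=
  C ((n : ℝ)⁻¹) * ∑ j : Fin n, X j ^ i

/-- The symmetric quartic form `f^{(n)} = c4 p_{(4)} + c31 p_{(3,1)} + c22 p_{(2,2)}
+ c211 p_{(2,1,1)} + c1111 p_{(1,1,1,1)}` determined by a coefficient vector in `ℝ^5`. -/
noncomputable def quarticForm (n : ℕ) (c4 c31 c22 c211 c1111 : ℝ) :
    MvPolynomial (Fin n) ℝ :=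
  C c4 * psum n 4 + C c31 * (psum n 3 * psum n 1) + C c22 * psum n 2 ^ 2
    + C c211 * (psum n 2 * psum n 1 ^ 2) + C c1111 * psum n 1 ^ 4

/-!
Sufficiency: the `α`-part is the quadratic form of `α` in `p₁², p₂`, and the `β`-part is `1/n`
times the sum over `j` of the quadratic form of `β` in `p₁ (x_j - p₁)` and `x_j² - p₂`, because
`∑_j (x_j^i - p_i)(x_j^k - p_k) = n (p_{i+k} - p_i p_k)`. A PSD form evaluated at elements of a
commutative `ℝ`-algebra is a sum of squares.

Necessity: a sum of squares is nonnegative, so evaluating at the point with `⌊w n⌋` coordinates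
equal to `a` and the others equal to `b` and letting `n → ∞` shows that the form is nonnegative on
the moments of every two-point distribution `w δ_a + (1 - w) δ_b`. In terms of the mean `m`, the
variance `V > 0` and `ν = 2m + κ₃ / V`, all of which two-point distributions realise freely, it is
`A m⁴ + B m² V + g V² + c₃₁ m V ν + c₄ V ν²` with `A = c₁₁₁₁ + c₂₁₁ + c₂₂ + c₃₁ + c₄`,
`g = c₂₂ + c₄` and `B = c₂₁₁ + c₃₁ + 2g`. Minimising over `V` (AM-GM) leaves the form
`(B + 2√(A g)) m² + c₃₁ m ν + c₄ ν²`, which is taken as `β`; comparing coefficients then forces `α`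
to be the rank-one matrix of `(√A + √g, -√g)`.
-/

theorem IsSumSq.map {R S F : Type*} [AddMonoid R] [Mul R] [AddMonoid S] [Mul S]
    [FunLike F R S] [AddMonoidHomClass F R S] [MulHomClass F R S] (f : F) {s : R}
    (hs : IsSumSq s) : IsSumSq (f s) := by
  induction hs with
  | zero => simp
  | sq_add a _ ih => simpa only [map_add, map_mul] using ih.sq_add (f a)

theorem Matrix.PosSemidef.isSumSq_sum_smul {ι R : Type*} [Fintype ι] [CommRing R] [Algebra ℝ R]
    {M : Matrix ι ι ℝ} (hM : M.PosSemidef) (x : ι → R) :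
    IsSumSq (∑ a, ∑ b, M a b • (x a * x b)) := by
  obtain ⟨m, v, rfl⟩ := Matrix.posSemidef_iff_eq_sum_vecMulVec.mp hM
  have : ∑ a, ∑ b, (∑ i, Matrix.vecMulVec (v i) (star (v i))) a b • (x a * x b)
      = ∑ i, (∑ a, v i a • x a) ^ 2 := by
    simp only [Matrix.sum_apply, Matrix.vecMulVec_apply, star_trivial, Finset.sum_smul, sq,
      Finset.sum_mul, Finset.mul_sum, smul_mul_smul_comm]
    conv_lhs => enter [2, a]; rw [Finset.sum_comm]
    rw [Finset.sum_comm]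
    exact Finset.sum_congr rfl fun _ _ => Finset.sum_comm
  rw [this]
  exact IsSumSq.sum_sq _ _

theorem Matrix.PosSemidef.isSumSq_fin_two {R : Type*} [CommRing R] [Algebra ℝ R] {a b d : ℝ}
    (h : (!![a, b; b, d]).PosSemidef) (P Q : R) :
    IsSumSq (a • P ^ 2 + (2 * b) • (P * Q) + d • Q ^ 2) := by
  convert h.isSumSq_sum_smul ![P, Q] using 1
  simp [Fin.sum_univ_two, Algebra.smul_def, map_ofNat]
  ring

theorem Matrix.PosSemidef.of_forall_fin_two {a b d : ℝ}
    (h : ∀ x y : ℝ, 0 ≤ a * x ^ 2 + 2 * b * x * y + d * y ^ 2) :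
    (!![a, b; b, d]).PosSemidef := by
  refine .of_dotProduct_mulVec_nonneg ?_ fun v => ?_
  · ext i j; fin_cases i <;> fin_cases j <;> rfl
  · refine (h (v 0) (v 1)).trans_eq ?_
    simp [dotProduct, Matrix.mulVec, Fin.sum_univ_two]
    ring

theorem add_two_mul_mul_nonneg_of_forall_pos {r s β : ℝ} (hr : 0 ≤ r) (hs : 0 ≤ s)
    (h : ∀ V : ℝ, 0 < V → 0 ≤ r ^ 2 + β * V + s ^ 2 * V ^ 2) : 0 ≤ β + 2 * r * s := by
  by_contra! hneg
  have hβ : 0 < -β := by nlinarith [mul_nonneg hr hs]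
  rcases hs.eq_or_lt with rfl | hs
  · have := h ((r ^ 2 + 1) / -β) (by positivity)
    rw [show β * ((r ^ 2 + 1) / -β) = -(r ^ 2 + 1) by field_simp [(neg_pos.mp hβ).ne]] at this
    nlinarith
  · have := h (-β / (2 * s ^ 2)) (by positivity)
    rw [show r ^ 2 + β * (-β / (2 * s ^ 2)) + s ^ 2 * (-β / (2 * s ^ 2)) ^ 2
        = (4 * r ^ 2 * s ^ 2 - β ^ 2) / (4 * s ^ 2) by field_simp; ring] at this
    have hle : β ^ 2 ≤ (2 * r * s) ^ 2 := by
      nlinarith [(le_div_iff₀ (by positivity)).mp this]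
    nlinarith [mul_nonneg hr hs.le]

theorem Matrix.PosSemidef.of_forall_moment_form_nonneg {r s B b c : ℝ} (hr : 0 ≤ r) (hs : 0 ≤ s)
    (h : ∀ m V ν : ℝ, 0 < V →
      0 ≤ r ^ 2 * m ^ 4 + B * m ^ 2 * V + s ^ 2 * V ^ 2 + b * m * V * ν + c * V * ν ^ 2) :
    (!![B + 2 * r * s, b / 2; b / 2, c]).PosSemidef := by
  refine .of_forall_fin_two fun x y => ?_
  have := add_two_mul_mul_nonneg_of_forall_pos (r := r * x ^ 2)
    (β := B * x ^ 2 + b * x * y + c * y ^ 2) (by positivity) hs fun V hV => (h x V y hV).trans_eq (by ring)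
  exact this.trans_eq (by ring)

theorem sum_X_pow_eq_C_mul_psum {n : ℕ} (hn : n ≠ 0) (i : ℕ) :
    ∑ j : Fin n, (X j : MvPolynomial (Fin n) ℝ) ^ i = C (n : ℝ) * psum n i := by
  rw [_root_.psum, ← mul_assoc, ← map_mul, mul_inv_cancel₀ (Nat.cast_ne_zero.mpr hn), map_one,
    one_mul]

theorem sum_X_pow_sub_psum_mul {n : ℕ} (hn : n ≠ 0) (i k : ℕ) :
    ∑ j : Fin n, (X j ^ i - psum n i) * (X j ^ k - psum n k)
      = C (n : ℝ) * (psum n (i + k) - psum n i * psum n k) := by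
  have hexp : ∀ j : Fin n, (X j ^ i - psum n i) * (X j ^ k - psum n k)
      = X j ^ (i + k) - X j ^ i * psum n k - psum n i * X j ^ k + psum n i * psum n k := by
    intro j; ring
  simp only [hexp, Finset.sum_add_distrib, Finset.sum_sub_distrib, ← Finset.sum_mul,
    ← Finset.mul_sum, sum_X_pow_eq_C_mul_psum hn, Finset.sum_const, Finset.card_univ,
    Fintype.card_fin, nsmul_eq_mul, ← C_eq_coe_nat]
  ring

theorem MvPolynomial.isSumSq_C {σ : Type*} {c : ℝ} (hc : 0 ≤ c) :
    IsSumSq (C c : MvPolynomial σ ℝ) := by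
  rw [← Real.mul_self_sqrt hc, map_mul]
  exact IsSumSq.mul_self _

theorem isSumSq_of_posSemidef {n : ℕ} (hn : n ≠ 0) {a11 a12 a22 b11 b12 b22 : ℝ}
    (hA : (!![a11, a12; a12, a22]).PosSemidef) (hB : (!![b11, b12; b12, b22]).PosSemidef) :
    IsSumSq (C a11 * psum n 1 ^ 4
          + C (2 * a12) * (psum n 2 * psum n 1 ^ 2)
          + C a22 * psum n 2 ^ 2
          + C b11 * (psum n 2 * psum n 1 ^ 2 - psum n 1 ^ 4)
          + C (2 * b12) * (psum n 3 * psum n 1 - psum n 2 * psum n 1 ^ 2)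
          + C b22 * (psum n 4 - psum n 2 ^ 2)) := by
  set p := psum n
  set u : Fin n → MvPolynomial (Fin n) ℝ := fun j => p 1 * (X j ^ 1 - p 1)
  set v : Fin n → MvPolynomial (Fin n) ℝ := fun j => X j ^ 2 - p 2
  have hterm : ∀ j, b11 • u j ^ 2 + (2 * b12) • (u j * v j) + b22 • v j ^ 2
      = C b11 * p 1 ^ 2 * ((X j ^ 1 - p 1) * (X j ^ 1 - p 1))
        + C (2 * b12) * p 1 * ((X j ^ 1 - p 1) * (X j ^ 2 - p 2))
        + C b22 * ((X j ^ 2 - p 2) * (X j ^ 2 - p 2)) := by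
    intro j; simp only [u, v, smul_eq_C_mul]; ring
  have hsum : ∑ j, (b11 • u j ^ 2 + (2 * b12) • (u j * v j) + b22 • v j ^ 2)
      = C (n : ℝ) * (C b11 * (p 2 * p 1 ^ 2 - p 1 ^ 4)
          + C (2 * b12) * (p 3 * p 1 - p 2 * p 1 ^ 2) + C b22 * (p 4 - p 2 ^ 2)) := by
    simp only [hterm, Finset.sum_add_distrib, ← Finset.mul_sum, p, sum_X_pow_sub_psum_mul hn]
    ring
  have hinv : C ((n : ℝ)⁻¹) * C (n : ℝ) = (1 : MvPolynomial (Fin n) ℝ) := by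
    rw [← map_mul, inv_mul_cancel₀ (Nat.cast_ne_zero.mpr hn), map_one]
  have hsplit : C a11 * p 1 ^ 4 + C (2 * a12) * (p 2 * p 1 ^ 2) + C a22 * p 2 ^ 2
      + C b11 * (p 2 * p 1 ^ 2 - p 1 ^ 4) + C (2 * b12) * (p 3 * p 1 - p 2 * p 1 ^ 2)
      + C b22 * (p 4 - p 2 ^ 2)
      = (a11 • (p 1 ^ 2) ^ 2 + (2 * a12) • (p 1 ^ 2 * p 2) + a22 • p 2 ^ 2)
        + C ((n : ℝ)⁻¹) * ∑ j, (b11 • u j ^ 2 + (2 * b12) • (u j * v j) + b22 • v j ^ 2) := by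
    rw [hsum]
    simp only [smul_eq_C_mul]
    linear_combination (-(C b11 * (p 2 * p 1 ^ 2 - p 1 ^ 4)
      + C (2 * b12) * (p 3 * p 1 - p 2 * p 1 ^ 2) + C b22 * (p 4 - p 2 ^ 2))) * hinv
  rw [hsplit]
  exact (hA.isSumSq_fin_two _ _).add <|
    (isSumSq_C (by positivity)).mul <| IsSumSq.sum fun j _ => hB.isSumSq_fin_two _ _

noncomputable def twoPointMoment (w a b : ℝ) (i : ℕ) : ℝ := w * a ^ i + (1 - w) * b ^ i

noncomputable def quarticOfMoments (c4 c31 c22 c211 c1111 : ℝ) (p : ℕ → ℝ) : ℝ :=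
  c4 * p 4 + c31 * (p 3 * p 1) + c22 * p 2 ^ 2 + c211 * (p 2 * p 1 ^ 2) + c1111 * p 1 ^ 4

theorem eval_quarticForm (n : ℕ) (c4 c31 c22 c211 c1111 : ℝ) (x : Fin n → ℝ) :
    eval x (quarticForm n c4 c31 c22 c211 c1111)
      = quarticOfMoments c4 c31 c22 c211 c1111 (fun i => eval x (psum n i)) := by
  simp [quarticForm, quarticOfMoments]

theorem eval_psum_twoPoint {n k : ℕ} (hn : n ≠ 0) (hk : k ≤ n) (a b : ℝ) (i : ℕ) :
    eval (fun j : Fin n => if (j : ℕ) < k then a else b) (psum n i)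
      = twoPointMoment (k / n) a b i := by
  have hsum : ∑ j : Fin n, (if (j : ℕ) < k then a else b) ^ i = k * a ^ i + (n - k) * b ^ i := by
    have hj : ∀ j : Fin n, (if (j : ℕ) < k then a else b) ^ i
        = b ^ i + (if (j : ℕ) < k then 1 else 0) * (a ^ i - b ^ i) := by
      intro j; split_ifs <;> ring
    simp only [hj, Finset.sum_add_distrib, ← Finset.sum_mul, Finset.sum_boole,
      Fin.card_filter_val_lt, min_eq_right hk, Finset.sum_const, Finset.card_univ,
      Fintype.card_fin, nsmul_eq_mul]
    ring
  have hn' : (n : ℝ) ≠ 0 := Nat.cast_ne_zero.mpr hn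
  simp only [_root_.psum, map_mul, eval_C, map_sum, map_pow, eval_X, hsum, twoPointMoment]
  field_simp

theorem quarticOfMoments_twoPoint_nonneg_of_isSumSq {c4 c31 c22 c211 c1111 : ℝ}
    (H : ∀ n : ℕ, 4 ≤ n → IsSumSq (quarticForm n c4 c31 c22 c211 c1111))
    {w : ℝ} (hw0 : 0 ≤ w) (hw1 : w ≤ 1) (a b : ℝ) :
    0 ≤ quarticOfMoments c4 c31 c22 c211 c1111 (twoPointMoment w a b) := by
  have hcont :
      Continuous fun w => quarticOfMoments c4 c31 c22 c211 c1111 (twoPointMoment w a b) := by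
    simp only [quarticOfMoments, twoPointMoment]
    fun_prop
  have hlim : Filter.Tendsto (fun n : ℕ => (⌊w * n⌋₊ : ℝ) / n) Filter.atTop (nhds w) :=
    (tendsto_nat_floor_mul_div_atTop hw0).comp tendsto_natCast_atTop_atTop
  refine ge_of_tendsto ((hcont.tendsto w).comp hlim) ?_
  filter_upwards [Filter.eventually_ge_atTop 4] with n hn
  have hn0 : n ≠ 0 := by omega
  have hk : ⌊w * n⌋₊ ≤ n := Nat.floor_le_of_le (by nlinarith [(Nat.cast_nonneg n : (0 : ℝ) ≤ n)])
  have := (H n hn).map (eval fun j : Fin n => if (j : ℕ) < ⌊w * n⌋₊ then a else b)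
  simpa only [Function.comp, eval_quarticForm, eval_psum_twoPoint hn0 hk] using this.nonneg

theorem exists_twoPoint_variance {V : ℝ} (hV : 0 < V) (μ : ℝ) :
    ∃ w D : ℝ, 0 ≤ w ∧ w ≤ 1 ∧ w * (1 - w) * D ^ 2 = V ∧ (1 - 2 * w) * D = μ := by
  set D := √(μ ^ 2 + 4 * V)
  have hD2 : D ^ 2 = μ ^ 2 + 4 * V := Real.sq_sqrt (by positivity)
  have hD : 0 < D := Real.sqrt_pos.mpr (by positivity)
  obtain ⟨hμ_ge, hμ_le⟩ := abs_le.mp (Real.abs_le_sqrt (by nlinarith) : |μ| ≤ D)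
  refine ⟨(D - μ) / (2 * D), D, div_nonneg (by linarith) (by positivity),
    (div_le_one (by positivity)).mpr (by linarith), ?_, ?_⟩
  · field_simp; nlinarith [hD2]
  · field_simp; ring

theorem quarticOfMoments_twoPoint_eq (c4 c31 c22 c211 c1111 w m D : ℝ) :
    quarticOfMoments c4 c31 c22 c211 c1111 (twoPointMoment w (m + (1 - w) * D) (m - w * D))
      = (c1111 + c211 + c22 + c31 + c4) * m ^ 4
        + (c211 + c31 + 2 * (c22 + c4)) * m ^ 2 * (w * (1 - w) * D ^ 2)
        + (c22 + c4) * (w * (1 - w) * D ^ 2) ^ 2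
        + c31 * m * (w * (1 - w) * D ^ 2) * (2 * m + (1 - 2 * w) * D)
        + c4 * (w * (1 - w) * D ^ 2) * (2 * m + (1 - 2 * w) * D) ^ 2 := by
  simp only [quarticOfMoments, twoPointMoment]
  ring

theorem moment_form_nonneg_of_isSumSq {c4 c31 c22 c211 c1111 : ℝ}
    (H : ∀ n : ℕ, 4 ≤ n → IsSumSq (quarticForm n c4 c31 c22 c211 c1111))
    (m V ν : ℝ) (hV : 0 < V) :
    0 ≤ (c1111 + c211 + c22 + c31 + c4) * m ^ 4 + (c211 + c31 + 2 * (c22 + c4)) * m ^ 2 * V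
      + (c22 + c4) * V ^ 2 + c31 * m * V * ν + c4 * V * ν ^ 2 := by
  obtain ⟨w, D, hw0, hw1, hwV, hwν⟩ := exists_twoPoint_variance hV (ν - 2 * m)
  have := quarticOfMoments_twoPoint_nonneg_of_isSumSq H hw0 hw1 (m + (1 - w) * D) (m - w * D)
  rwa [quarticOfMoments_twoPoint_eq, hwV, hwν, add_sub_cancel] at this

/-- A symmetric quartic `f^{(n)}` is a sum of squares for every `n ≥ 4` iff its
coefficient vector admits a decomposition by two positive semidefinite `2×2`
matrices, uniformly in `n`. -/
theorem mem_S4_iff_decomposition (c4 c31 c22 c211 c1111 : ℝ) :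
    (∀ n : ℕ, 4 ≤ n → IsSumSq (quarticForm n c4 c31 c22 c211 c1111)) ↔
    ∃ a11 a12 a22 b11 b12 b22 : ℝ,
      Matrix.PosSemidef !![a11, a12; a12, a22] ∧
      Matrix.PosSemidef !![b11, b12; b12, b22] ∧
      ∀ n : ℕ, 4 ≤ n →
        quarticForm n c4 c31 c22 c211 c1111 =
          C a11 * psum n 1 ^ 4
          + C (2 * a12) * (psum n 2 * psum n 1 ^ 2)
          + C a22 * psum n 2 ^ 2
          + C b11 * (psum n 2 * psum n 1 ^ 2 - psum n 1 ^ 4)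
          + C (2 * b12) * (psum n 3 * psum n 1 - psum n 2 * psum n 1 ^ 2)
          + C b22 * (psum n 4 - psum n 2 ^ 2) := by
  constructor
  · intro H
    have hA : 0 ≤ c1111 + c211 + c22 + c31 + c4 := by
      have := quarticOfMoments_twoPoint_nonneg_of_isSumSq H zero_le_one le_rfl 1 1
      simp only [quarticOfMoments, twoPointMoment] at this
      linarith
    have hg : 0 ≤ c22 + c4 := by simpa using moment_form_nonneg_of_isSumSq H 0 1 0 one_pos
    obtain ⟨r, hr, hrA⟩ : ∃ r, 0 ≤ r ∧ r ^ 2 = c1111 + c211 + c22 + c31 + c4 :=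
      ⟨_, Real.sqrt_nonneg _, Real.sq_sqrt hA⟩
    obtain ⟨s, hs, hsg⟩ : ∃ s, 0 ≤ s ∧ s ^ 2 = c22 + c4 := ⟨_, Real.sqrt_nonneg _, Real.sq_sqrt hg⟩
    refine ⟨(r + s) ^ 2, (r + s) * -s, s ^ 2, c211 + c31 + 2 * s ^ 2 + 2 * r * s, c31 / 2, c4,
      .of_forall_fin_two fun x y => (sq_nonneg ((r + s) * x - s * y)).trans_eq (by ring),
      .of_forall_moment_form_nonneg hr hs fun m V ν hV => ?_, fun n _ => ?_⟩
    · rw [hrA, hsg]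
      exact moment_form_nonneg_of_isSumSq H m V ν hV
    · rw [quarticForm, show c1111 = r ^ 2 - c211 - c22 - c31 - c4 by linarith,
        show c22 = s ^ 2 - c4 by linarith, mul_div_cancel₀ c31 two_ne_zero]
      simp only [map_add, map_sub, map_mul, map_pow, map_neg, map_ofNat]
      ring
  · rintro ⟨a11, a12, a22, b11, b12, b22, hA, hB, hf⟩ n hn
    rw [hf n hn]
    exact isSumSq_of_posSemidef (by omega) hA hB
end

section
/- Let n ≥ 2d, let K* := {m : H^S_{n,2d} → ℝ linear : m(g) ≥ 0 for every symmetric form g of degree 2d that is a sum of squares} be the dual cone of the symmetric sums of squares, and let ℓ ∈ K* be nonzero with kernel W_ℓ := {p ∈ H_{n,d} : ℓ(Sym_n(p^2)) = 0}. Then ℓ spans an extreme ray of K* (i.e. whenever ℓ = m_1 + m_2 with m_1, m_2 ∈ K*, each m_i is a nonnegative scalar multiple of ℓ) if and only if W_ℓ^{<2>} is a hyperplane in H^S_{n,2d}, i.e. a linear subspace of codimension one. -/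
open MvPolynomial

/-- The symmetrization `Sym_n(f) = (1/n!) Σ_{σ ∈ S_n} σ·f`. -/
noncomputable def symmetrize (n : ℕ) (f : MvPolynomial (Fin n) ℝ) :
    MvPolynomial (Fin n) ℝ :=
  C ((n.factorial : ℝ)⁻¹) * ∑ σ : Equiv.Perm (Fin n), rename (⇑σ) f

/-- Membership in `H^S_{n,2d}`: symmetric forms of degree `2d`. -/
def IsSymmetricForm (n k : ℕ) (g : MvPolynomial (Fin n) ℝ) : Prop :=
  g.IsSymmetric ∧ g.IsHomogeneous k

/-- Membership in the dual cone `(Σ^S_{n,2d})^*`, for a linear functional on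
`H^S_{n,2d}` represented by an arbitrary linear extension to the polynomial
ring: nonnegativity on all symmetric degree-`2d` sums of squares. -/
def MemDualSos (n k : ℕ) (m : MvPolynomial (Fin n) ℝ →ₗ[ℝ] ℝ) : Prop :=
  ∀ g : MvPolynomial (Fin n) ℝ, IsSymmetricForm n k g → IsSumSq g → 0 ≤ m g

/-- The set `W_ℓ^{<2>} = {Sym_n(Σ_i f_i g_i) : f_i ∈ W_ℓ, g_i ∈ H_{n,d}}`,
where `W_ℓ = {p ∈ H_{n,d} : ℓ(Sym_n(p²)) = 0}` is the kernel of the quadratic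
form `Q_ℓ`. -/
def Wsq (n d : ℕ) (ℓ : MvPolynomial (Fin n) ℝ →ₗ[ℝ] ℝ) :
    Set (MvPolynomial (Fin n) ℝ) :=
  {h | ∃ (m : ℕ) (F G : Fin m → MvPolynomial (Fin n) ℝ),
    (∀ i, (F i).IsHomogeneous d ∧ ℓ (symmetrize n (F i ^ 2)) = 0) ∧
    (∀ i, (G i).IsHomogeneous d) ∧
    h = symmetrize n (∑ i, F i * G i)}

/-! `ℓ` lies in the dual cone exactly when the form `B_ℓ(p, q) = ℓ(Sym_n(p q))` is positive
semidefinite on `H_{n,d}`: a symmetric sum of squares of degree `2d` is a sum of squares of forms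
of degree `d`, and it equals its own symmetrization. By Cauchy–Schwarz, `W_ℓ` is the radical
of `B_ℓ`, and any `m` with `0 ≤ m ≤ ℓ` on the sums of squares vanishes on `W_ℓ^{<2>}`; when
`W_ℓ^{<2>}` is a hyperplane such an `m` is a multiple of `ℓ`. Conversely, if some `g ∈ ker ℓ`
lies outside `W_ℓ^{<2>}`, take `m` vanishing on `W_ℓ^{<2>}` with `m g ≠ 0`. Then `B_m` vanishes
on the radical of `B_ℓ`, so in finite dimension `ε |B_m| ≤ B_ℓ` for some `ε > 0`, and
`ℓ = ½ (ℓ + ε m) + ½ (ℓ - ε m)` is a decomposition inside the dual cone that is not proportional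
to `ℓ`. -/

namespace MvPolynomial

variable {σ R : Type*}

theorem isHomogeneous_iff_forall_mem_support [CommSemiring R] {p : MvPolynomial σ R} {n : ℕ} :
    p.IsHomogeneous n ↔ ∀ α ∈ p.support, α.degree = n := by
  simp only [IsHomogeneous, IsWeightedHomogeneous, Finsupp.degree_eq_weight_one, mem_support_iff]
  rfl

theorem homogeneousSubmodule_add_le_mul [CommSemiring R] (d e : ℕ) :
    homogeneousSubmodule σ R (d + e) ≤ homogeneousSubmodule σ R d * homogeneousSubmodule σ R e := by
  intro g hg
  rw [g.as_sum]
  refine Submodule.sum_mem _ fun α hα => ?_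
  have hα : α.degree = d + e := isHomogeneous_iff_forall_mem_support.1 hg α hα
  obtain ⟨β, hβα, hβ⟩ := α.exists_le_degree_eq d (by omega)
  have hγ : (α - β).degree = e := by
    have := map_add Finsupp.degree β (α - β)
    rw [add_tsub_cancel_of_le hβα] at this
    omega
  rw [← add_tsub_cancel_of_le hβα, ← mul_one (coeff _ g), ← monomial_mul]
  exact Submodule.mul_mem_mul (isHomogeneous_monomial _ hβ) (isHomogeneous_monomial _ hγ)

instance [Finite σ] [CommSemiring R] (d : ℕ) : Module.Finite R (homogeneousSubmodule σ R d) :=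
  Module.Finite.iff_fg.2 (homogeneousSubmodule_fg (σ := σ) (R := R) d)

theorem homogeneousComponent_add_mul [CommSemiring R] {p q : MvPolynomial σ R} {i j : ℕ}
    (h : ∀ α ∈ p.support, ∀ β ∈ q.support, α.degree + β.degree = i + j → α.degree = i) :
    homogeneousComponent (i + j) (p * q) =
      homogeneousComponent i p * homogeneousComponent j q := by
  classical
  ext μ
  rw [coeff_homogeneousComponent, coeff_mul, coeff_mul]
  split_ifs with hμ
  · refine Finset.sum_congr rfl fun ⟨α, β⟩ hαβ => ?_
    rw [Finset.HasAntidiagonal.mem_antidiagonal] at hαβ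
    simp only [coeff_homogeneousComponent]
    by_cases hp : coeff α p = 0
    · simp [hp]
    by_cases hq : coeff β q = 0
    · simp [hq]
    have hdeg : α.degree + β.degree = i + j := by rw [← map_add, hαβ, hμ]
    have hα := h α (mem_support_iff.2 hp) β (mem_support_iff.2 hq) hdeg
    rw [if_pos hα, if_pos (by omega)]
  · refine (Finset.sum_eq_zero fun ⟨α, β⟩ hαβ => ?_).symm
    rw [Finset.HasAntidiagonal.mem_antidiagonal] at hαβ
    simp only [coeff_homogeneousComponent]
    split_ifs with hα hβ
    · exact absurd (by rw [← hαβ, map_add, hα, hβ]) hμ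
    all_goals simp

theorem eq_zero_of_sum_mul_self_eq_zero {ι : Type*} [Fintype ι] {h : ι → MvPolynomial σ ℝ}
    (H : ∑ i, h i * h i = 0) (i : ι) : h i = 0 := by
  refine MvPolynomial.funext fun x => ?_
  have hx : ∑ j, eval x (h j) * eval x (h j) = 0 := by simpa using congrArg (eval x) H
  rw [Finset.sum_eq_zero_iff_of_nonneg fun j _ => mul_self_nonneg _] at hx
  simpa using hx i (Finset.mem_univ i)

theorem isHomogeneous_of_sum_mul_self {ι : Type*} [Fintype ι] {h : ι → MvPolynomial σ ℝ}
    {d : ℕ} (hg : (∑ i, h i * h i).IsHomogeneous (2 * d)) (i : ι) : (h i).IsHomogeneous d := by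
  classical
  set T := Finset.univ.biUnion fun i => (h i).support.image Finsupp.degree
  have mem_T : ∀ i, ∀ α ∈ (h i).support, α.degree ∈ T := fun i α hα =>
    Finset.mem_biUnion.2 ⟨i, Finset.mem_univ _, Finset.mem_image_of_mem _ hα⟩
  -- the top and the bottom degree `K` occurring in the `h i` both survive in `∑ i, h i * h i`,
  -- whose component of degree `2 K` is the nonzero sum of squares `∑ i, (h i)_K * (h i)_K`
  have extremal_eq : ∀ K ∈ T, (∀ a ∈ T, ∀ b ∈ T, a + b = K + K → a = K) → K = d := by
    intro K hK hext
    obtain ⟨i₀, -, α₀, hα₀, rfl⟩ : ∃ i₀ ∈ Finset.univ, ∃ α₀ ∈ (h i₀).support, α₀.degree = K := by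
      simpa [T] using hK
    have hcomp : homogeneousComponent (α₀.degree + α₀.degree) (∑ i, h i * h i) =
        ∑ i, homogeneousComponent α₀.degree (h i) * homogeneousComponent α₀.degree (h i) := by
      rw [map_sum]
      exact Finset.sum_congr rfl fun i _ => homogeneousComponent_add_mul
        fun α hα β hβ => hext _ (mem_T i α hα) _ (mem_T i β hβ)
    have hi₀ : homogeneousComponent α₀.degree (h i₀) ≠ 0 := fun h0 => by
      have := congrArg (coeff α₀) h0
      rw [coeff_homogeneousComponent, if_pos rfl, coeff_zero] at this
      exact mem_support_iff.1 hα₀ this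
    by_contra hne
    refine hi₀ (eq_zero_of_sum_mul_self_eq_zero (h := fun i => homogeneousComponent _ (h i)) ?_ i₀)
    rw [← hcomp, homogeneousComponent_of_mem hg, if_neg (by omega)]
  rw [isHomogeneous_iff_forall_mem_support]
  intro α hα
  have hαT := mem_T i α hα
  have hmax := extremal_eq _ (T.max'_mem ⟨_, hαT⟩) fun a ha b hb _ => by
    have := T.le_max' a ha; have := T.le_max' b hb; omega
  have hmin := extremal_eq _ (T.min'_mem ⟨_, hαT⟩) fun a ha b hb _ => by
    have := T.min'_le a ha; have := T.min'_le b hb; omega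
  have := T.le_max' _ hαT; have := T.min'_le _ hαT; omega

end MvPolynomial

namespace LinearMap.BilinForm

theorem apply_self_eq_sum_repr {R M ι : Type*} [CommSemiring R] [AddCommMonoid M] [Module R M]
    [Fintype ι] (D : LinearMap.BilinForm R M) (v : Module.Basis ι R M) (x : M) :
    D x x = ∑ i, ∑ j, v.repr x i * v.repr x j * D (v i) (v j) := by
  conv_lhs => rw [← v.sum_repr x]
  simp only [map_sum, map_smul, LinearMap.sum_apply, LinearMap.smul_apply, smul_eq_mul,
    Finset.mul_sum]
  rw [Finset.sum_comm]
  refine Finset.sum_congr rfl fun i _ => Finset.sum_congr rfl fun j _ => by ring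

variable {𝕜 V : Type*} [Field 𝕜] [LinearOrder 𝕜] [IsStrictOrderedRing 𝕜]
  [AddCommGroup V] [Module 𝕜 V]

/-- If `B (v i) (v i) = 0` then `v i` lies in the radical of `B`, so `C (v i) (v j) = 0` and the
junk value `0⁻¹ = 0` in the bound is harmless. -/
theorem abs_apply_self_le_of_iIsOrtho {ι : Type*} [Fintype ι] {B C : LinearMap.BilinForm 𝕜 V}
    {v : Module.Basis ι 𝕜 V} (hv : B.iIsOrtho v) (hB₀ : ∀ x, 0 ≤ B x x) (hC : C.IsSymm)
    (hBC : ∀ x, B x x = 0 → ∀ y, C x y = 0) (x : V) :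
    |C x x| ≤ (∑ i, ∑ j, |C (v i) (v j)| * ((B (v i) (v i))⁻¹ + (B (v j) (v j))⁻¹)) * B x x := by
  set a := v.repr x
  have hBx : B x x = ∑ i, a i ^ 2 * B (v i) (v i) := by
    rw [apply_self_eq_sum_repr B v x]
    refine Finset.sum_congr rfl fun i _ => ?_
    rw [Finset.sum_eq_single i (fun j _ hji => by rw [hv (Ne.symm hji), mul_zero])
      (by simp)]
    ring
  have hsq : ∀ i, 0 < B (v i) (v i) → a i ^ 2 ≤ (B (v i) (v i))⁻¹ * B x x := fun i hi => by
    rw [le_inv_mul_iff₀ hi, mul_comm, hBx]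
    exact Finset.single_le_sum (f := fun i => a i ^ 2 * B (v i) (v i))
      (fun j _ => mul_nonneg (sq_nonneg _) (hB₀ _)) (Finset.mem_univ i)
  have hterm : ∀ i j, |a i * a j * C (v i) (v j)|
      ≤ |C (v i) (v j)| * ((B (v i) (v i))⁻¹ + (B (v j) (v j))⁻¹) * B x x := by
    intro i j
    rcases (hB₀ (v i)).eq_or_lt with hi | hi
    · simp [hBC _ hi.symm]
    rcases (hB₀ (v j)).eq_or_lt with hj | hj
    · simp [hC.eq (v i), hBC _ hj.symm]
    have hai := hsq i hi
    have haj := hsq j hj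
    have hprod : |a i * a j| ≤ a i ^ 2 + a j ^ 2 := by
      rw [abs_mul]
      nlinarith [sq_abs (a i), sq_abs (a j), abs_nonneg (a i), abs_nonneg (a j),
        sq_nonneg (|a i| - |a j|)]
    rw [abs_mul, mul_comm, mul_assoc, add_mul]
    exact mul_le_mul_of_nonneg_left (by linarith) (abs_nonneg _)
  calc |C x x| ≤ ∑ i, ∑ j, |a i * a j * C (v i) (v j)| := by
        rw [apply_self_eq_sum_repr C v x]
        exact (Finset.abs_sum_le_sum_abs _ _).trans
          (Finset.sum_le_sum fun i _ => Finset.abs_sum_le_sum_abs _ _)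
    _ ≤ _ := by
        rw [Finset.sum_mul]
        refine Finset.sum_le_sum fun i _ => ?_
        rw [Finset.sum_mul]
        exact Finset.sum_le_sum fun j _ => hterm i j

theorem exists_pos_mul_abs_apply_self_le [FiniteDimensional 𝕜 V] {B C : LinearMap.BilinForm 𝕜 V}
    (hB : B.IsSymm) (hB₀ : ∀ x, 0 ≤ B x x) (hC : C.IsSymm)
    (hBC : ∀ x, B x x = 0 → ∀ y, C x y = 0) :
    ∃ ε > 0, ∀ x, ε * |C x x| ≤ B x x := by
  have : Invertible (2 : 𝕜) := invertibleOfNonzero two_ne_zero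
  obtain ⟨v, hv⟩ := exists_orthogonal_basis (isSymm_iff.1 hB)
  set M := ∑ i, ∑ j, |C (v i) (v j)| * ((B (v i) (v i))⁻¹ + (B (v j) (v j))⁻¹)
  refine ⟨(|M| + 1)⁻¹, by positivity, fun x => ?_⟩
  rw [inv_mul_le_iff₀ (by positivity)]
  calc |C x x| ≤ M * B x x := abs_apply_self_le_of_iIsOrtho hv hB₀ hC hBC x
    _ ≤ (|M| + 1) * B x x := by
        gcongr
        · exact hB₀ x
        · linarith [le_abs_self M]

end LinearMap.BilinForm

theorem IsSumSq.exists_eq_sum_mul_self {R : Type*} [AddCommMonoid R] [Mul R] {a : R}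
    (ha : IsSumSq a) : ∃ (m : ℕ) (h : Fin m → R), a = ∑ i, h i * h i := by
  induction ha with
  | zero => exact ⟨0, Fin.elim0, by simp⟩
  | sq_add a _ ih =>
    obtain ⟨m, h, rfl⟩ := ih
    exact ⟨m + 1, Fin.cons a h, by simp [Fin.sum_univ_succ]⟩

open scoped Pointwise

section Symmetrize

variable {n : ℕ}

noncomputable def symmetrizeₗ (n : ℕ) : MvPolynomial (Fin n) ℝ →ₗ[ℝ] MvPolynomial (Fin n) ℝ :=
  (n.factorial : ℝ)⁻¹ • ∑ σ : Equiv.Perm (Fin n), (rename (R := ℝ) σ).toLinearMap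

@[simp]
theorem symmetrizeₗ_apply (f : MvPolynomial (Fin n) ℝ) : symmetrizeₗ n f = symmetrize n f := by
  simp [symmetrize, symmetrizeₗ, LinearMap.sum_apply, smul_eq_C_mul]

theorem symmetrize_of_isSymmetric {g : MvPolynomial (Fin n) ℝ} (hg : g.IsSymmetric) :
    symmetrize n g = g := by
  simp only [symmetrize, hg _, Finset.sum_const, Finset.card_univ, Fintype.card_perm,
    Fintype.card_fin, nsmul_eq_mul]
  rw [← mul_assoc, ← C_eq_coe_nat, ← C_mul,
    inv_mul_cancel₀ (by exact_mod_cast n.factorial_ne_zero), C_1, one_mul]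

theorem isSymmetric_symmetrize (f : MvPolynomial (Fin n) ℝ) : (symmetrize n f).IsSymmetric := by
  intro e
  simp only [symmetrize, map_mul, rename_C, map_sum, rename_rename]
  congr 1
  exact Fintype.sum_equiv (Equiv.mulLeft e) _ _ fun σ => rfl

theorem isHomogeneous_symmetrize {f : MvPolynomial (Fin n) ℝ} {k : ℕ}
    (hf : f.IsHomogeneous k) : (symmetrize n f).IsHomogeneous k := by
  simpa [symmetrize] using (isHomogeneous_C _ _).mul
    (IsHomogeneous.sum _ _ _ fun σ _ => hf.rename_isHomogeneous)

theorem isSymmetricForm_symmetrize_mul {p q : MvPolynomial (Fin n) ℝ} {d : ℕ}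
    (hp : p.IsHomogeneous d) (hq : q.IsHomogeneous d) :
    IsSymmetricForm n (2 * d) (symmetrize n (p * q)) :=
  ⟨isSymmetric_symmetrize _, isHomogeneous_symmetrize (two_mul d ▸ hp.mul hq)⟩

theorem isSumSq_symmetrize_mul_self (p : MvPolynomial (Fin n) ℝ) :
    IsSumSq (symmetrize n (p * p)) := by
  have hc : (C ((n.factorial : ℝ)⁻¹) : MvPolynomial (Fin n) ℝ) =
      C √((n.factorial : ℝ)⁻¹) * C √((n.factorial : ℝ)⁻¹) := by
    rw [← C_mul, Real.mul_self_sqrt (by positivity)]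
  simp only [symmetrize, hc, map_mul]
  exact (IsSumSq.mul_self _).mul (IsSumSq.sum_mul_self _ _)

theorem IsSymmetricForm.sub_smul {k : ℕ} {g g' : MvPolynomial (Fin n) ℝ}
    (hg : IsSymmetricForm n k g) (hg' : IsSymmetricForm n k g') (c : ℝ) :
    IsSymmetricForm n k (g - c • g') :=
  ⟨hg.1.sub (hg'.1.smul c),
    Submodule.sub_mem (homogeneousSubmodule (Fin n) ℝ k) hg.2 (Submodule.smul_mem _ c hg'.2)⟩

end Symmetrize

section DualCone

variable {n d : ℕ} {ℓ μ : MvPolynomial (Fin n) ℝ →ₗ[ℝ] ℝ}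

noncomputable def symForm (n d : ℕ) (μ : MvPolynomial (Fin n) ℝ →ₗ[ℝ] ℝ) :
    LinearMap.BilinForm ℝ (homogeneousSubmodule (Fin n) ℝ d) :=
  LinearMap.BilinForm.restrict ((LinearMap.mul ℝ _).compr₂ (μ ∘ₗ symmetrizeₗ n)) _

@[simp]
theorem symForm_apply (p q : homogeneousSubmodule (Fin n) ℝ d) :
    symForm n d μ p q = μ (symmetrize n (p * q)) := by
  simp [symForm]

theorem symForm_isSymm : (symForm n d μ).IsSymm :=
  ⟨fun p q => by simp [mul_comm]⟩

theorem memDualSos_iff : MemDualSos n (2 * d) μ ↔ ∀ p, 0 ≤ symForm n d μ p p := by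
  constructor
  · intro hμ p
    rw [symForm_apply]
    exact hμ _ (isSymmetricForm_symmetrize_mul p.2 p.2) (isSumSq_symmetrize_mul_self _)
  · intro hμ g hg hsos
    obtain ⟨m, h, rfl⟩ := hsos.exists_eq_sum_mul_self
    have hh := isHomogeneous_of_sum_mul_self hg.2
    rw [← symmetrize_of_isSymmetric hg.1, ← symmetrizeₗ_apply, map_sum, map_sum]
    exact Finset.sum_nonneg fun i _ => by simpa using hμ ⟨h i, hh i⟩

theorem MemDualSos.smul {k : ℕ} {c : ℝ} (hc : 0 ≤ c) (hμ : MemDualSos n k μ) :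
    MemDualSos n k (c • μ) :=
  fun g hg hs => by simpa using mul_nonneg hc (hμ g hg hs)

def kerQ (n d : ℕ) (ℓ : MvPolynomial (Fin n) ℝ →ₗ[ℝ] ℝ) : Set (MvPolynomial (Fin n) ℝ) :=
  {p | p.IsHomogeneous d ∧ ℓ (symmetrize n (p ^ 2)) = 0}

noncomputable def wsqSubmodule (n d : ℕ) (ℓ : MvPolynomial (Fin n) ℝ →ₗ[ℝ] ℝ) :
    Submodule ℝ (MvPolynomial (Fin n) ℝ) :=
  (Submodule.span ℝ (kerQ n d ℓ * (homogeneousSubmodule (Fin n) ℝ d : Set _))).map (symmetrizeₗ n)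

theorem coe_wsqSubmodule : (wsqSubmodule n d ℓ : Set (MvPolynomial (Fin n) ℝ)) = Wsq n d ℓ := by
  ext h
  constructor
  · rintro ⟨x, hx, rfl⟩
    obtain ⟨k, c, s, rfl⟩ := Submodule.mem_span_set'.1 hx
    choose F hF G hG hFG using fun i => Set.mem_mul.1 (s i).2
    refine ⟨k, F, fun i => c i • G i, hF, fun i => Submodule.smul_mem _ _ (hG i), ?_⟩
    simp only [← hFG, symmetrizeₗ_apply, mul_smul_comm]
  · rintro ⟨k, F, G, hF, hG, rfl⟩
    refine ⟨∑ i, F i * G i, Submodule.sum_mem _ fun i _ => ?_, symmetrizeₗ_apply _⟩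
    exact Submodule.subset_span (Set.mul_mem_mul (hF i) ((mem_homogeneousSubmodule _ _).2 (hG i)))

theorem wsqSubmodule_le_ker_iff :
    wsqSubmodule n d ℓ ≤ LinearMap.ker μ ↔
      ∀ p, symForm n d ℓ p p = 0 → ∀ q, symForm n d μ p q = 0 := by
  rw [wsqSubmodule, Submodule.map_le_iff_le_comap, Submodule.span_le, Set.mul_subset_iff]
  constructor
  · intro h p hp q
    simpa using h p ⟨p.2, by simpa [sq] using hp⟩ q q.2
  · rintro h p ⟨hp, hp0⟩ q hq
    simpa using h ⟨p, hp⟩ (by simpa [sq] using hp0) ⟨q, hq⟩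

theorem wsqSubmodule_le_ker_of_forall (hμ : MemDualSos n (2 * d) μ)
    (h : ∀ p, symForm n d ℓ p p = 0 → symForm n d μ p p = 0) :
    wsqSubmodule n d ℓ ≤ LinearMap.ker μ := by
  refine wsqSubmodule_le_ker_iff.2 fun p hp q => ?_
  have := (LinearMap.BilinForm.apply_apply_same_eq_zero_iff _ (memDualSos_iff.1 hμ)
    (LinearMap.BilinForm.isSymm_iff.1 symForm_isSymm)).1 (h p hp)
  exact LinearMap.congr_fun (LinearMap.mem_ker.1 this) q

theorem wsqSubmodule_le_ker (hℓ : MemDualSos n (2 * d) ℓ) : wsqSubmodule n d ℓ ≤ LinearMap.ker ℓ :=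
  wsqSubmodule_le_ker_of_forall hℓ fun _ h => h

theorem mem_wsqSubmodule_of_forall (h : ∀ p, symForm n d ℓ p p = 0) {g : MvPolynomial (Fin n) ℝ}
    (hg : IsSymmetricForm n (2 * d) g) : g ∈ wsqSubmodule n d ℓ := by
  rw [← symmetrize_of_isSymmetric hg.1, ← symmetrizeₗ_apply]
  refine Submodule.mem_map_of_mem ?_
  have hg2 : g.IsHomogeneous (d + d) := two_mul d ▸ hg.2
  have hg' := homogeneousSubmodule_add_le_mul d d hg2
  rw [Submodule.mul_eq_span_mul_set] at hg'
  refine Submodule.span_mono (Set.mul_subset_mul_right fun p hp => ?_) hg'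
  exact ⟨hp, by simpa [sq] using h ⟨p, hp⟩⟩

theorem exists_memDualSos_add_smul_and_sub_smul (hℓ : MemDualSos n (2 * d) ℓ)
    (hμ : wsqSubmodule n d ℓ ≤ LinearMap.ker μ) :
    ∃ ε : ℝ, 0 < ε ∧ MemDualSos n (2 * d) (ℓ + ε • μ) ∧ MemDualSos n (2 * d) (ℓ - ε • μ) := by
  obtain ⟨ε, hε, hbound⟩ := LinearMap.BilinForm.exists_pos_mul_abs_apply_self_le symForm_isSymm
    (memDualSos_iff.1 hℓ) symForm_isSymm (wsqSubmodule_le_ker_iff.1 hμ)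
  refine ⟨ε, hε, memDualSos_iff.2 fun p => ?_, memDualSos_iff.2 fun p => ?_⟩ <;>
  · have h₁ := mul_le_mul_of_nonneg_left (le_abs_self (symForm n d μ p p)) hε.le
    have h₂ := mul_le_mul_of_nonneg_left (neg_abs_le (symForm n d μ p p)) hε.le
    have := hbound p
    simp only [symForm_apply, LinearMap.add_apply, LinearMap.sub_apply, LinearMap.smul_apply,
      smul_eq_mul] at *
    linarith

def IsExtremeDual (n k : ℕ) (ℓ : MvPolynomial (Fin n) ℝ →ₗ[ℝ] ℝ) : Prop :=
  ∀ m₁ m₂ : MvPolynomial (Fin n) ℝ →ₗ[ℝ] ℝ,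
    MemDualSos n k m₁ → MemDualSos n k m₂ →
    (∀ g, IsSymmetricForm n k g → ℓ g = m₁ g + m₂ g) →
    (∃ t : ℝ, 0 ≤ t ∧ ∀ g, IsSymmetricForm n k g → m₁ g = t * ℓ g) ∧
    (∃ t : ℝ, 0 ≤ t ∧ ∀ g, IsSymmetricForm n k g → m₂ g = t * ℓ g)

theorem mem_wsqSubmodule_of_isExtremeDual (hℓ : MemDualSos n (2 * d) ℓ)
    (hext : IsExtremeDual n (2 * d) ℓ) {g : MvPolynomial (Fin n) ℝ}
    (hg : IsSymmetricForm n (2 * d) g) (hℓg : ℓ g = 0) : g ∈ wsqSubmodule n d ℓ := by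
  by_contra hgW
  obtain ⟨μ, hμg, hμ⟩ := Submodule.exists_le_ker_of_notMem hgW
  obtain ⟨ε, hε, h_add, h_sub⟩ := exists_memDualSos_add_smul_and_sub_smul hℓ hμ
  have half : (0 : ℝ) ≤ 1 / 2 := by norm_num
  obtain ⟨⟨t, -, ht⟩, -⟩ := hext _ _ (h_add.smul half) (h_sub.smul half) fun g _ => by
    simp only [LinearMap.smul_apply, LinearMap.add_apply, LinearMap.sub_apply, smul_eq_mul]
    ring
  exact hμg (by simpa [hℓg, hε.ne'] using ht g hg)

theorem exists_symForm_pos (hℓ : MemDualSos n (2 * d) ℓ)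
    (hne : ∃ g, IsSymmetricForm n (2 * d) g ∧ ℓ g ≠ 0) : ∃ p, 0 < symForm n d ℓ p p := by
  by_contra! h
  obtain ⟨g, hg, hℓg⟩ := hne
  have hg := mem_wsqSubmodule_of_forall (fun p => le_antisymm (h p) (memDualSos_iff.1 hℓ p)) hg
  exact hℓg (wsqSubmodule_le_ker hℓ hg)

theorem exists_nonneg_eq_mul_of_le (hℓ : MemDualSos n (2 * d) ℓ)
    (hne : ∃ g, IsSymmetricForm n (2 * d) g ∧ ℓ g ≠ 0) {f₀ : MvPolynomial (Fin n) ℝ}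
    (hspan : ∀ g, IsSymmetricForm n (2 * d) g →
      ∃ w ∈ wsqSubmodule n d ℓ, ∃ t : ℝ, g = w + t • f₀)
    (hμ : MemDualSos n (2 * d) μ)
    (hμℓ : ∀ g, IsSymmetricForm n (2 * d) g → IsSumSq g → μ g ≤ ℓ g) :
    ∃ t : ℝ, 0 ≤ t ∧ ∀ g, IsSymmetricForm n (2 * d) g → μ g = t * ℓ g := by
  have hℓW := wsqSubmodule_le_ker hℓ
  have hμW : wsqSubmodule n d ℓ ≤ LinearMap.ker μ := by
    refine wsqSubmodule_le_ker_of_forall hμ fun p hp => le_antisymm ?_ (memDualSos_iff.1 hμ p)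
    calc symForm n d μ p p ≤ symForm n d ℓ p p := by
          simpa using hμℓ _ (isSymmetricForm_symmetrize_mul p.2 p.2)
            (isSumSq_symmetrize_mul_self _)
      _ = 0 := hp
  have hℓf₀ : ℓ f₀ ≠ 0 := by
    obtain ⟨g, hg, hℓg⟩ := hne
    obtain ⟨w, hw, t, rfl⟩ := hspan g hg
    intro h0
    simp [LinearMap.mem_ker.1 (hℓW hw), h0] at hℓg
  have hprop : ∀ g, IsSymmetricForm n (2 * d) g → μ g = μ f₀ / ℓ f₀ * ℓ g := by
    intro g hg
    obtain ⟨w, hw, t, rfl⟩ := hspan g hg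
    simp only [map_add, map_smul, smul_eq_mul, LinearMap.mem_ker.1 (hμW hw),
      LinearMap.mem_ker.1 (hℓW hw), zero_add]
    field_simp
  refine ⟨μ f₀ / ℓ f₀, ?_, hprop⟩
  obtain ⟨p, hp⟩ := exists_symForm_pos hℓ hne
  have := memDualSos_iff.1 hμ p
  rw [symForm_apply, hprop _ (isSymmetricForm_symmetrize_mul p.2 p.2)] at this
  exact nonneg_of_mul_nonneg_left this (by simpa using hp)

end DualCone

theorem extreme_ray_iff_hyperplane_general (n d : ℕ)
    (ℓ : MvPolynomial (Fin n) ℝ →ₗ[ℝ] ℝ)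
    (hmem : MemDualSos n (2 * d) ℓ)
    (hne : ∃ g : MvPolynomial (Fin n) ℝ, IsSymmetricForm n (2 * d) g ∧ ℓ g ≠ 0) :
    (∀ m₁ m₂ : MvPolynomial (Fin n) ℝ →ₗ[ℝ] ℝ,
        MemDualSos n (2 * d) m₁ → MemDualSos n (2 * d) m₂ →
        (∀ g, IsSymmetricForm n (2 * d) g → ℓ g = m₁ g + m₂ g) →
        (∃ t : ℝ, 0 ≤ t ∧ ∀ g, IsSymmetricForm n (2 * d) g → m₁ g = t * ℓ g) ∧
        (∃ t : ℝ, 0 ≤ t ∧ ∀ g, IsSymmetricForm n (2 * d) g → m₂ g = t * ℓ g)) ↔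
    (∃ f0 : MvPolynomial (Fin n) ℝ, IsSymmetricForm n (2 * d) f0 ∧
        f0 ∉ Wsq n d ℓ ∧
        ∀ g, IsSymmetricForm n (2 * d) g →
          ∃ w ∈ Wsq n d ℓ, ∃ t : ℝ, g = w + t • f0) := by
  change IsExtremeDual n (2 * d) ℓ ↔ _
  simp only [← coe_wsqSubmodule, SetLike.mem_coe]
  obtain ⟨g₁, hg₁, hℓg₁⟩ := hne
  constructor
  · intro hext
    refine ⟨g₁, hg₁, fun hW => hℓg₁ (wsqSubmodule_le_ker hmem hW), fun g hg => ?_⟩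
    refine ⟨g - (ℓ g / ℓ g₁) • g₁, ?_, ℓ g / ℓ g₁, by abel⟩
    refine mem_wsqSubmodule_of_isExtremeDual hmem hext (hg.sub_smul hg₁ _) ?_
    simp [hℓg₁]
  · rintro ⟨f₀, -, -, hspan⟩ m₁ m₂ h₁ h₂ hsum
    exact ⟨exists_nonneg_eq_mul_of_le hmem ⟨g₁, hg₁, hℓg₁⟩ hspan h₁
        fun g hg hs => by linarith [hsum g hg, h₂ g hg hs],
      exists_nonneg_eq_mul_of_le hmem ⟨g₁, hg₁, hℓg₁⟩ hspan h₂
        fun g hg hs => by linarith [hsum g hg, h₁ g hg hs]⟩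

/-- A nonzero `ℓ` in the dual cone of the symmetric sums of squares spans an
extreme ray (every decomposition `ℓ = m₁ + m₂` within the dual cone has both
summands nonnegative multiples of `ℓ`, as functionals on `H^S_{n,2d}`) if and
only if `W_ℓ^{<2>}` is a hyperplane in `H^S_{n,2d}`. -/
theorem extreme_ray_iff_hyperplane (n d : ℕ) (hn : 2 * d ≤ n)
    (ℓ : MvPolynomial (Fin n) ℝ →ₗ[ℝ] ℝ)
    (hmem : MemDualSos n (2 * d) ℓ)
    (hne : ∃ g : MvPolynomial (Fin n) ℝ, IsSymmetricForm n (2 * d) g ∧ ℓ g ≠ 0) :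
    (∀ m₁ m₂ : MvPolynomial (Fin n) ℝ →ₗ[ℝ] ℝ,
        MemDualSos n (2 * d) m₁ → MemDualSos n (2 * d) m₂ →
        (∀ g, IsSymmetricForm n (2 * d) g → ℓ g = m₁ g + m₂ g) →
        (∃ t : ℝ, 0 ≤ t ∧ ∀ g, IsSymmetricForm n (2 * d) g → m₁ g = t * ℓ g) ∧
        (∃ t : ℝ, 0 ≤ t ∧ ∀ g, IsSymmetricForm n (2 * d) g → m₂ g = t * ℓ g)) ↔
    (∃ f0 : MvPolynomial (Fin n) ℝ, IsSymmetricForm n (2 * d) f0 ∧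
        f0 ∉ Wsq n d ℓ ∧
        ∀ g, IsSymmetricForm n (2 * d) g →
          ∃ w ∈ Wsq n d ℓ, ∃ t : ℝ, g = w + t • f0) :=
  extreme_ray_iff_hyperplane_general n d ℓ hmem hne
end
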